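/- arXiv:2110.05627 — 7 statements merged into one kernel-verified Lean document; each statement's English description precedes it below -/
import Mathlib

section
/- Summation Lemma: Let w be a symmetric weight function on n vertices and let w*¹, …, w*ᵐ be subnetworks of w. Suppose for each k there is a real U_k such that Q_{w*ᵏ}(C) ≤ U_k for every partition C, and set the penalty p_k = Q̄(w*ᵏ) − U_k. Let λ_1, …, λ_m ≥ 0 satisfy ∑_k λ_k · |w*ᵏ i j| ≤ |w i j| for all i < j (a permissible linear combination), and let w* be the weight function w* i j = ∑_k λ_k · w*ᵏ i j. Then for every partition C, Q_{w*}(C) ≤ Q̄(w*) − ∑_k λ_k · p_k. -/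
open Finset

/-- Score of a partition `C` of a weighted complete graph `w`:
sum of weights of edges within clusters, `Q_w(C) = ∑_{i<j, C i = C j} w i j`. -/
noncomputable def cpScore {n : ℕ} (w : Fin n → Fin n → ℝ) (C : Fin n → ℕ) : ℝ :=
  ∑ i : Fin n, ∑ j : Fin n, if i < j ∧ C i = C j then w i j else 0

/-- Trivial upper bound `Q̄(w) = ∑_{i<j, 0 < w i j} w i j`. -/
noncomputable def trivUB {n : ℕ} (w : Fin n → Fin n → ℝ) : ℝ :=
  ∑ i : Fin n, ∑ j : Fin n, if i < j ∧ 0 < w i j then w i j else 0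

/-- `ws` is a subnetwork of `w`: symmetric, `|ws i j| ≤ |w i j|` and weights share signs. -/
def IsSubnetwork {n : ℕ} (w ws : Fin n → Fin n → ℝ) : Prop :=
  (∀ i j, ws i j = ws j i) ∧
  ∀ i j : Fin n, i < j → |ws i j| ≤ |w i j| ∧ 0 ≤ ws i j * w i j

private lemma sum_swap_aux {n m : ℕ} (lam : Fin m → ℝ) (g : Fin m → Fin n → Fin n → ℝ) :
    ∑ k, lam k * ∑ i : Fin n, ∑ j : Fin n, g k i j
      = ∑ i : Fin n, ∑ j : Fin n, ∑ k, lam k * g k i j := by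
  simp only [Finset.mul_sum]
  rw [Finset.sum_comm]
  exact Finset.sum_congr rfl fun i _ => Finset.sum_comm

/-- **Summation lemma.** If `ws k` are subnetworks of `w` with partition-score upper
bounds `U k` and penalties `p k = Q̄(ws k) - U k`, and `lam k ≥ 0` form a permissible
linear combination (`∑ k lam k * |ws k i j| ≤ |w i j|` for `i < j`) with combined
weights `wstar i j = ∑ k lam k * ws k i j`, then every partition `C` satisfies
`Q_{wstar}(C) ≤ Q̄(wstar) - ∑ k lam k * p k`. -/
theorem summation_lemma {n m : ℕ} (w : Fin n → Fin n → ℝ)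
    (hw : ∀ i j, w i j = w j i)
    (ws : Fin m → Fin n → Fin n → ℝ)
    (hsub : ∀ k, IsSubnetwork w (ws k))
    (U : Fin m → ℝ)
    (hU : ∀ k (C : Fin n → ℕ), cpScore (ws k) C ≤ U k)
    (p : Fin m → ℝ)
    (hp : ∀ k, p k = trivUB (ws k) - U k)
    (lam : Fin m → ℝ) (hlam : ∀ k, 0 ≤ lam k)
    (hperm : ∀ i j : Fin n, i < j → ∑ k, lam k * |ws k i j| ≤ |w i j|)
    (wstar : Fin n → Fin n → ℝ)
    (hwstar : ∀ i j, wstar i j = ∑ k, lam k * ws k i j)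
    (C : Fin n → ℕ) :
    cpScore wstar C ≤ trivUB wstar - ∑ k, lam k * p k := by
  -- Linearity of the score
  have hsc : cpScore wstar C = ∑ k, lam k * cpScore (ws k) C := by
    simp only [cpScore, sum_swap_aux]
    refine Finset.sum_congr rfl fun i _ => Finset.sum_congr rfl fun j _ => ?_
    rw [hwstar]
    split_ifs with h <;> simp
  -- trivUB of combination equals combination of trivUBs
  have htr : trivUB wstar = ∑ k, lam k * trivUB (ws k) := by
    simp only [trivUB, sum_swap_aux]
    refine Finset.sum_congr rfl fun i _ => Finset.sum_congr rfl fun j _ => ?_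
    by_cases hij : i < j
    · rcases lt_trichotomy (w i j) 0 with hneg | hzero | hpos
      · have hk : ∀ k, ws k i j ≤ 0 := fun k => by
          have h2 := ((hsub k).2 i j hij).2
          nlinarith
        have hstar : wstar i j ≤ 0 := by
          rw [hwstar]
          exact Finset.sum_nonpos fun k _ =>
            mul_nonpos_of_nonneg_of_nonpos (hlam k) (hk k)
        rw [if_neg (by push_neg; intro _; linarith)]
        refine (Finset.sum_eq_zero fun k _ => ?_).symm
        rw [if_neg (by push_neg; intro _; linarith [hk k]), mul_zero]
      · have hk : ∀ k, ws k i j = 0 := fun k => by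
          have h1 := ((hsub k).2 i j hij).1
          rw [hzero] at h1
          simpa [abs_nonpos_iff] using h1
        have hstar : wstar i j = 0 := by
          rw [hwstar]; simp [hk]
        simp [hstar, hk]
      · have hk : ∀ k, 0 ≤ ws k i j := fun k => by
          have h2 := ((hsub k).2 i j hij).2
          nlinarith
        have hsn : 0 ≤ wstar i j := by
          rw [hwstar]
          exact Finset.sum_nonneg fun k _ => mul_nonneg (hlam k) (hk k)
        have hRHS : ∑ k, lam k * (if i < j ∧ 0 < ws k i j then ws k i j else 0)
            = wstar i j := by
          rw [hwstar]
          refine Finset.sum_congr rfl fun k _ => ?_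
          by_cases hks : 0 < ws k i j
          · rw [if_pos ⟨hij, hks⟩]
          · have : ws k i j = 0 := le_antisymm (not_lt.mp hks) (hk k)
            simp [this]
        rw [hRHS]
        by_cases h0 : 0 < wstar i j
        · rw [if_pos ⟨hij, h0⟩]
        · have : wstar i j = 0 := le_antisymm (not_lt.mp h0) hsn
          simp [this]
    · rw [if_neg (by tauto)]
      refine (Finset.sum_eq_zero fun k _ => ?_).symm
      rw [if_neg (by tauto), mul_zero]
  have hbd : ∑ k, lam k * cpScore (ws k) C ≤ ∑ k, lam k * U k :=
    Finset.sum_le_sum fun k _ => mul_le_mul_of_nonneg_left (hU k C) (hlam k)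
  have hfin : ∑ k, lam k * U k = trivUB wstar - ∑ k, lam k * p k := by
    rw [htr, ← Finset.sum_sub_distrib]
    refine Finset.sum_congr rfl fun k _ => ?_
    rw [hp k]; ring
  rw [hsc]
  linarith
end

section
/- Penalty Theorem: Let w be a symmetric weight function on n vertices and let w*¹, …, w*ᵐ be subnetworks of w. Suppose for each k there is a real U_k such that Q_{w*ᵏ}(C) ≤ U_k for every partition C, and set the penalty p_k = Q̄(w*ᵏ) − U_k. Let λ_1, …, λ_m ≥ 0 satisfy ∑_k λ_k · |w*ᵏ i j| ≤ |w i j| for all i < j (a permissible linear combination). Then for every partition C of the whole graph, Q_w(C) ≤ Q̄(w) − ∑_k λ_k · p_k. -/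
open Finset

/-- **Penalty theorem.** If `ws k` are subnetworks of `w` with partition-score upper
bounds `U k` and penalties `p k = Q̄(ws k) - U k`, and `lam k ≥ 0` form a permissible
linear combination (`∑ k lam k * |ws k i j| ≤ |w i j|` for `i < j`), then every
partition `C` of the whole graph satisfies `Q_w(C) ≤ Q̄(w) - ∑ k lam k * p k`. -/
theorem penalty_theorem {n m : ℕ} (w : Fin n → Fin n → ℝ)
    (hw : ∀ i j, w i j = w j i)
    (ws : Fin m → Fin n → Fin n → ℝ)
    (hsub : ∀ k, IsSubnetwork w (ws k))
    (U : Fin m → ℝ)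
    (hU : ∀ k (C : Fin n → ℕ), cpScore (ws k) C ≤ U k)
    (p : Fin m → ℝ)
    (hp : ∀ k, p k = trivUB (ws k) - U k)
    (lam : Fin m → ℝ) (hlam : ∀ k, 0 ≤ lam k)
    (hperm : ∀ i j : Fin n, i < j → ∑ k, lam k * |ws k i j| ≤ |w i j|)
    (C : Fin n → ℕ) :
    cpScore w C ≤ trivUB w - ∑ k, lam k * p k := by
  -- key pointwise inequality
  have point : ∀ i j : Fin n,
      (if i < j ∧ C i = C j then w i j else 0) +
        ∑ k, lam k * ((if i < j ∧ 0 < ws k i j then ws k i j else 0) -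
          (if i < j ∧ C i = C j then ws k i j else 0)) ≤
      (if i < j ∧ 0 < w i j then w i j else 0) := by
    intro i j
    by_cases hij : i < j
    · have hperm' := hperm i j hij
      have hfacts := fun k => (hsub k).2 i j hij
      by_cases hwp : 0 < w i j
      · -- all ws k i j ≥ 0
        have hnn : ∀ k, 0 ≤ ws k i j := by
          intro k
          by_contra hlt
          push_neg at hlt
          nlinarith [(hfacts k).2]
        have habs : |w i j| = w i j := abs_of_pos hwp
        by_cases hC : C i = C j
        · simp only [hij, hC, hwp, and_self, if_true, true_and]
          have : ∀ k ∈ Finset.univ, lam k *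
              ((if 0 < ws k i j then ws k i j else 0) - ws k i j) = 0 := by
            intro k _
            by_cases h0 : 0 < ws k i j
            · simp [h0]
            · have : ws k i j = 0 := le_antisymm (not_lt.1 h0) (hnn k)
              simp [h0, this]
          rw [Finset.sum_congr rfl this]
          simp
        · simp only [hij, hC, hwp, and_false, and_true, if_false, if_true, true_and,
            and_self, sub_zero, zero_add]
          calc ∑ k, lam k * (if 0 < ws k i j then ws k i j else 0)
              ≤ ∑ k, lam k * |ws k i j| := by
                apply Finset.sum_le_sum
                intro k _
                apply mul_le_mul_of_nonneg_left _ (hlam k)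
                by_cases h0 : 0 < ws k i j
                · simp [h0, le_abs_self]
                · simp [h0, abs_nonneg]
            _ ≤ w i j := by rw [← habs]; exact hperm'
      · -- all ws k i j ≤ 0
        have hnp : ∀ k, ws k i j ≤ 0 := by
          intro k
          rcases lt_or_eq_of_le (not_lt.1 hwp) with hlt | heq
          · by_contra h
            push_neg at h
            nlinarith [(hfacts k).2]
          · have : |ws k i j| ≤ 0 := by
              have := (hfacts k).1; rw [heq, abs_zero] at this; exact this
            have := abs_nonneg (ws k i j)
            have h0 : |ws k i j| = 0 := le_antisymm ‹|ws k i j| ≤ 0› this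
            rw [abs_eq_zero] at h0
            simp [h0]
        have hno : ∀ k, ¬ (0 < ws k i j) := fun k => not_lt.2 (hnp k)
        have habs : |w i j| = -w i j := abs_of_nonpos (not_lt.1 hwp)
        by_cases hC : C i = C j
        · simp only [hij, hC, hwp, true_and, and_true, and_false, if_true, if_false]
          have : ∀ k ∈ Finset.univ, lam k *
              ((if 0 < ws k i j then ws k i j else 0) - ws k i j)
              = lam k * |ws k i j| := by
            intro k _
            rw [if_neg (hno k), zero_sub, ← abs_of_nonpos (hnp k)]
          rw [Finset.sum_congr rfl this]
          have := hperm'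
          rw [habs] at this
          linarith
        · simp only [hij, hC, hwp, and_false, if_false, true_and, sub_zero, zero_add]
          have : ∀ k ∈ Finset.univ, lam k *
              (if 0 < ws k i j then ws k i j else 0) = 0 := by
            intro k _; rw [if_neg (hno k), mul_zero]
          rw [Finset.sum_congr rfl this]
          simp
    · simp [hij]
  -- sum up the pointwise inequality
  have key : cpScore w C + ∑ k, lam k * (trivUB (ws k) - cpScore (ws k) C)
      ≤ trivUB w := by
    have h1 : ∑ k, lam k * (trivUB (ws k) - cpScore (ws k) C)
        = ∑ i : Fin n, ∑ j : Fin n, ∑ k, lam k *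
          ((if i < j ∧ 0 < ws k i j then ws k i j else 0) -
           (if i < j ∧ C i = C j then ws k i j else 0)) := by
      simp only [trivUB, cpScore, ← Finset.sum_sub_distrib, Finset.mul_sum]
      rw [Finset.sum_comm]
      refine Finset.sum_congr rfl fun i _ => ?_
      rw [Finset.sum_comm]
    rw [h1, cpScore, trivUB, ← Finset.sum_add_distrib]
    apply Finset.sum_le_sum
    intro i _
    rw [← Finset.sum_add_distrib]
    exact Finset.sum_le_sum fun j _ => point i j
  have h2 : ∑ k, lam k * p k ≤ ∑ k, lam k * (trivUB (ws k) - cpScore (ws k) C) := by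
    apply Finset.sum_le_sum
    intro k _
    apply mul_le_mul_of_nonneg_left _ (hlam k)
    rw [hp k]
    linarith [hU k C]
  linarith
end

section
/- Optimal partition of a chain: For a chain of length k ≥ 3 with positive edge weights a_1, …, a_{k−1} on consecutive edges and weight −b (b > 0) on the edge (1, k), the maximum of the score Q over all partitions equals ∑_{i=1}^{k−1} a_i − min(a_1, …, a_{k−1}, b); that is, every partition C satisfies Q(C) ≤ ∑_{i=1}^{k−1} a_i − min(a_1, …, a_{k−1}, b), and some partition attains this value. -/
open Finset

/-- Weights of a chain on `k` vertices `0, …, k-1`: consecutive edges `(i, i+1)`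
have positive weight `a i`, the edge `(0, k-1)` has weight `-b`, all other edges `0`. -/
noncomputable def chainW (k : ℕ) (a : ℕ → ℝ) (b : ℝ) : Fin k → Fin k → ℝ := fun i j =>
  if j.val = i.val + 1 then a i.val
  else if i.val = j.val + 1 then a j.val
  else if i.val = 0 ∧ j.val = k - 1 then -b
  else if i.val = k - 1 ∧ j.val = 0 then -b
  else 0

/-- Contribution of the consecutive edge `(m, m+1)` to the score. -/
noncomputable def step (k : ℕ) (a : ℕ → ℝ) (C : Fin k → ℕ) (m : ℕ) : ℝ :=
  if h : m + 1 < k then (if C ⟨m, Nat.lt_of_succ_lt h⟩ = C ⟨m+1, h⟩ then a m else 0) else 0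

lemma chain_score (k : ℕ) (hk : 3 ≤ k) (a : ℕ → ℝ) (b : ℝ) (C : Fin k → ℕ) :
    cpScore (chainW k a b) C =
      (∑ m ∈ Finset.range (k-1), step k a C m)
        + (if C ⟨0, by omega⟩ = C ⟨k-1, by omega⟩ then -b else 0) := by
  have hpt : ∀ i j : Fin k,
      (if i < j ∧ C i = C j then chainW k a b i j else 0) =
      (if j.val = i.val + 1 ∧ C i = C j then a i.val else 0)
      + (if i.val = 0 ∧ j.val = k-1 ∧ C i = C j then -b else 0) := by
    intro i j
    have hi := i.isLt
    have hj := j.isLt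
    simp only [chainW, Fin.lt_def]
    by_cases hC : C i = C j
    · simp only [hC, eq_self_iff_true, and_true]
      split_ifs <;> first | (exfalso; omega) | ring
    · simp [hC]
  have h1 : cpScore (chainW k a b) C =
      (∑ i : Fin k, ∑ j : Fin k, if j.val = i.val + 1 ∧ C i = C j then a i.val else 0)
      + (∑ i : Fin k, ∑ j : Fin k, if i.val = 0 ∧ j.val = k-1 ∧ C i = C j then -b else 0) := by
    rw [cpScore, ← Finset.sum_add_distrib]
    refine Finset.sum_congr rfl fun i _ => ?_
    rw [← Finset.sum_add_distrib]
    exact Finset.sum_congr rfl fun j _ => hpt i j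
  have h2 : ∀ i : Fin k, (∑ j : Fin k, if j.val = i.val + 1 ∧ C i = C j then a i.val else 0)
      = step k a C i.val := by
    intro i
    rw [step]
    by_cases h : i.val + 1 < k
    · rw [dif_pos h]
      rw [Finset.sum_eq_single (⟨i.val+1, h⟩ : Fin k)]
      · simp [Fin.eta]
      · intro j _ hne
        rw [if_neg]
        rintro ⟨h1, -⟩
        exact hne (Fin.ext h1)
      · simp
    · rw [dif_neg h]
      refine Finset.sum_eq_zero fun j _ => ?_
      rw [if_neg]
      rintro ⟨h1, -⟩
      exact h (h1 ▸ j.isLt)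
  have h3 : (∑ i : Fin k, step k a C i.val) = ∑ m ∈ Finset.range (k-1), step k a C m := by
    rw [Fin.sum_univ_eq_sum_range]
    have : Finset.range k = insert (k-1) (Finset.range (k-1)) := by
      rw [← Finset.range_add_one]; congr 1; omega
    rw [this, Finset.sum_insert (by simp)]
    have : step k a C (k-1) = 0 := by
      rw [step, dif_neg (by omega)]
    rw [this, zero_add]
  have h4 : (∑ i : Fin k, ∑ j : Fin k, if i.val = 0 ∧ j.val = k-1 ∧ C i = C j then -b else 0)
      = (if C ⟨0, by omega⟩ = C ⟨k-1, by omega⟩ then -b else 0) := by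
    rw [Finset.sum_eq_single (⟨0, by omega⟩ : Fin k)]
    · rw [Finset.sum_eq_single (⟨k-1, by omega⟩ : Fin k)]
      · simp
      · intro j _ hne
        rw [if_neg]
        rintro ⟨-, h1, -⟩
        exact hne (Fin.ext h1)
      · simp
    · intro i _ hne
      refine Finset.sum_eq_zero fun j _ => ?_
      rw [if_neg]
      rintro ⟨h1, -⟩
      exact hne (Fin.ext h1)
    · simp
  rw [h1, h4]
  congr 1
  rw [← h3]
  exact Finset.sum_congr rfl fun i _ => h2 i

/-- **Optimal partition of a chain.** For a chain of length `k ≥ 3` with positive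
weights `a 0, …, a (k-2)` on consecutive edges and weight `-b` (`b > 0`) on the edge
`(0, k-1)`, the maximum of the score over all partitions equals
`∑ a i - min (min of the a's) b`: every partition is bounded by this value and some
partition attains it. -/
theorem chain_optimal_partition (k : ℕ) (hk : 3 ≤ k) (a : ℕ → ℝ) (b : ℝ)
    (ha : ∀ i, i < k - 1 → 0 < a i) (hb : 0 < b) :
    IsGreatest {q : ℝ | ∃ C : Fin k → ℕ, q = cpScore (chainW k a b) C}
      ((∑ i ∈ Finset.range (k - 1), a i)
        - min ((Finset.range (k - 1)).inf' (Finset.nonempty_range_iff.mpr (by omega)) a) b) := by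
  have hne : (Finset.range (k-1)).Nonempty := Finset.nonempty_range_iff.mpr (by omega)
  set μ := (Finset.range (k-1)).inf' hne a with hμdef
  have hstep_le : ∀ (C : Fin k → ℕ), ∀ m ∈ Finset.range (k-1), step k a C m ≤ a m := by
    intro C m hm
    rw [Finset.mem_range] at hm
    rw [step, dif_pos (by omega)]
    split_ifs
    · exact le_refl _
    · exact (ha m hm).le
  constructor
  · -- membership: some partition attains the value
    rcases le_total b μ with hbμ | hμb
    · -- all in one cluster
      refine ⟨fun _ => 0, ?_⟩
      rw [chain_score k hk a b]
      have hsum : ∑ m ∈ Finset.range (k-1), step k a (fun _ => (0:ℕ)) m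
          = ∑ m ∈ Finset.range (k-1), a m := by
        refine Finset.sum_congr rfl fun m hm => ?_
        rw [Finset.mem_range] at hm
        rw [step, dif_pos (by omega), if_pos rfl]
      rw [hsum, if_pos rfl, min_eq_right hbμ]
      ring
    · -- cut at the minimal edge
      obtain ⟨j, hjmem, hja⟩ := Finset.exists_mem_eq_inf' hne a
      have hj : j < k - 1 := Finset.mem_range.mp hjmem
      refine ⟨fun i => if i.val ≤ j then 0 else 1, ?_⟩
      rw [chain_score k hk a b]
      have hsum : ∑ m ∈ Finset.range (k-1),
            step k a (fun i : Fin k => if i.val ≤ j then (0:ℕ) else 1) m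
          = (∑ m ∈ Finset.range (k-1), a m) - a j := by
        rw [← Finset.sum_erase_add _ _ hjmem]
        have hstepj : step k a (fun i : Fin k => if i.val ≤ j then (0:ℕ) else 1) j = 0 := by
          rw [step, dif_pos (by omega), if_neg]
          simp
        rw [hstepj, add_zero]
        rw [← Finset.sum_erase_eq_sub hjmem]
        refine Finset.sum_congr rfl fun m hm => ?_
        have hmj : m ≠ j := Finset.ne_of_mem_erase hm
        have hm' : m < k - 1 := Finset.mem_range.mp (Finset.mem_of_mem_erase hm)
        rw [step, dif_pos (by omega), if_pos]
        rcases lt_or_gt_of_ne hmj with h | h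
        · simp only []
          rw [if_pos (by omega), if_pos (by omega)]
        · simp only []
          rw [if_neg (by omega), if_neg (by omega)]
      rw [hsum, if_neg, min_eq_left hμb, hμdef, hja]
      · ring
      · simp only []
        rw [if_pos (by omega), if_neg (by omega)]
        exact Nat.zero_ne_one
  · -- upper bound
    rintro q ⟨C, rfl⟩
    rw [chain_score k hk a b C]
    by_cases hC : C ⟨0, by omega⟩ = C ⟨k-1, by omega⟩
    · rw [if_pos hC]
      have h1 : ∑ m ∈ Finset.range (k-1), step k a C m ≤ ∑ m ∈ Finset.range (k-1), a m :=
        Finset.sum_le_sum (hstep_le C)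
      have h2 : min μ b ≤ b := min_le_right _ _
      linarith
    · rw [if_neg hC]
      have hex : ∃ j, ∃ hj : j < k - 1,
          C ⟨j, by omega⟩ ≠ C ⟨j+1, by omega⟩ := by
        by_contra h
        push_neg at h
        have key : ∀ m, ∀ hm : m < k, C ⟨0, by omega⟩ = C ⟨m, hm⟩ := by
          intro m
          induction m with
          | zero => intro hm; rfl
          | succ n ih =>
            intro hm
            rw [ih (by omega)]
            exact h n (by omega)
        exact hC (key (k-1) (by omega))
      obtain ⟨j, hj, hCj⟩ := hex
      have hjmem : j ∈ Finset.range (k-1) := Finset.mem_range.mpr hj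
      have hstepj : step k a C j = 0 := by
        rw [step, dif_pos (by omega), if_neg hCj]
      have h1 : ∑ m ∈ Finset.range (k-1), step k a C m
          ≤ (∑ m ∈ Finset.range (k-1), a m) - a j := by
        rw [← Finset.sum_erase_add _ _ hjmem, hstepj, add_zero,
          ← Finset.sum_erase_eq_sub hjmem]
        exact Finset.sum_le_sum fun m hm => hstep_le C m (Finset.mem_of_mem_erase hm)
      have h2 : min μ b ≤ a j := le_trans (min_le_left _ _) (Finset.inf'_le a hjmem)
      linarith
end

section
/- Star penalty: Fix p > 0 and path lengths l_1, l_2, l_3 ≥ 1 with L = l_1 + l_2 + l_3. Consider the reduced star: a weighted complete graph whose vertex set consists of a center m, three simple paths starting at m that pairwise share only the vertex m, with endpoints i, j, k, where every edge along the three paths (l_1, l_2, l_3 edges respectively) has weight p, each of the edges (i, j), (j, k), (i, k) has weight −p, and all other edge weights are 0. Then the maximum of the score Q over all partitions equals (L − 2)·p; equivalently, the penalty of the reduced star is exactly 2p. -/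
open Finset

/-- Weights of the reduced star with center `0` and three paths of `l1`, `l2`, `l3`
edges pairwise sharing only the center. Vertices are `0, …, l1+l2+l3`:
path 1 is `0, 1, …, l1` (endpoint `e1 = l1`), path 2 is `0, l1+1, …, l1+l2`
(endpoint `e2 = l1+l2`), path 3 is `0, l1+l2+1, …, l1+l2+l3` (endpoint `e3 = l1+l2+l3`).
Every path edge has weight `p`, the edges `(e1,e2)`, `(e1,e3)`, `(e2,e3)` have weight
`-p`, and all other edges have weight `0`. -/
noncomputable def starW (l1 l2 l3 : ℕ) (p : ℝ) (u v : ℕ) : ℝ :=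
  let e1 := l1
  let e2 := l1 + l2
  let e3 := l1 + l2 + l3
  if (u = e1 ∧ v = e2) ∨ (u = e2 ∧ v = e1) ∨ (u = e1 ∧ v = e3) ∨ (u = e3 ∧ v = e1) ∨
      (u = e2 ∧ v = e3) ∨ (u = e3 ∧ v = e2) then -p
  else if (v = u + 1 ∧ u ≠ e1 ∧ u ≠ e2) ∨ (u = v + 1 ∧ v ≠ e1 ∧ v ≠ e2) then p
  else if (u = 0 ∧ (v = e1 + 1 ∨ v = e2 + 1)) ∨ (v = 0 ∧ (u = e1 + 1 ∨ u = e2 + 1)) then p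
  else 0

/-! ### Auxiliary lemmas for `star_penalty` -/

lemma starW_eval (l1 l2 l3 : ℕ) (p : ℝ) (u v : ℕ) :
    starW l1 l2 l3 p u v =
      if (u = l1 ∧ v = l1 + l2) ∨ (u = l1 + l2 ∧ v = l1) ∨ (u = l1 ∧ v = l1 + l2 + l3) ∨
          (u = l1 + l2 + l3 ∧ v = l1) ∨ (u = l1 + l2 ∧ v = l1 + l2 + l3) ∨
          (u = l1 + l2 + l3 ∧ v = l1 + l2) then -p
      else if (v = u + 1 ∧ u ≠ l1 ∧ u ≠ l1 + l2) ∨ (u = v + 1 ∧ v ≠ l1 ∧ v ≠ l1 + l2) then p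
      else if (u = 0 ∧ (v = l1 + 1 ∨ v = l1 + l2 + 1)) ∨
          (v = 0 ∧ (u = l1 + 1 ∨ u = l1 + l2 + 1)) then p
      else 0 := rfl

lemma starW_consec (l1 l2 l3 : ℕ) (p : ℝ) (u : ℕ) (hu3 : u < l1 + l2 + l3)
    (hu1 : u ≠ l1) (hu2 : u ≠ l1 + l2) : starW l1 l2 l3 p u (u + 1) = p := by
  have hA : ¬((u = l1 ∧ u + 1 = l1 + l2) ∨ (u = l1 + l2 ∧ u + 1 = l1) ∨
      (u = l1 ∧ u + 1 = l1 + l2 + l3) ∨ (u = l1 + l2 + l3 ∧ u + 1 = l1) ∨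
      (u = l1 + l2 ∧ u + 1 = l1 + l2 + l3) ∨ (u = l1 + l2 + l3 ∧ u + 1 = l1 + l2)) := by omega
  have hB : (u + 1 = u + 1 ∧ u ≠ l1 ∧ u ≠ l1 + l2) ∨
      (u = u + 1 + 1 ∧ u + 1 ≠ l1 ∧ u + 1 ≠ l1 + l2) := Or.inl ⟨rfl, hu1, hu2⟩
  rw [starW_eval, if_neg hA, if_pos hB]

lemma starW_0e1 (l1 l2 l3 : ℕ) (p : ℝ) (h1 : 1 ≤ l1) :
    starW l1 l2 l3 p 0 (l1 + 1) = p := by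
  have hA : ¬((0 = l1 ∧ l1 + 1 = l1 + l2) ∨ (0 = l1 + l2 ∧ l1 + 1 = l1) ∨
      (0 = l1 ∧ l1 + 1 = l1 + l2 + l3) ∨ (0 = l1 + l2 + l3 ∧ l1 + 1 = l1) ∨
      (0 = l1 + l2 ∧ l1 + 1 = l1 + l2 + l3) ∨ (0 = l1 + l2 + l3 ∧ l1 + 1 = l1 + l2)) := by
    omega
  have hB : ¬((l1 + 1 = 0 + 1 ∧ 0 ≠ l1 ∧ 0 ≠ l1 + l2) ∨
      (0 = l1 + 1 + 1 ∧ l1 + 1 ≠ l1 ∧ l1 + 1 ≠ l1 + l2)) := by clear hA; omega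
  have hC : (0 = 0 ∧ (l1 + 1 = l1 + 1 ∨ l1 + 1 = l1 + l2 + 1)) ∨
      (l1 + 1 = 0 ∧ (0 = l1 + 1 ∨ 0 = l1 + l2 + 1)) := Or.inl ⟨rfl, Or.inl rfl⟩
  rw [starW_eval, if_neg hA, if_neg hB, if_pos hC]

lemma starW_0e2 (l1 l2 l3 : ℕ) (p : ℝ) (h1 : 1 ≤ l1) :
    starW l1 l2 l3 p 0 (l1 + l2 + 1) = p := by
  have hA : ¬((0 = l1 ∧ l1 + l2 + 1 = l1 + l2) ∨ (0 = l1 + l2 ∧ l1 + l2 + 1 = l1) ∨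
      (0 = l1 ∧ l1 + l2 + 1 = l1 + l2 + l3) ∨ (0 = l1 + l2 + l3 ∧ l1 + l2 + 1 = l1) ∨
      (0 = l1 + l2 ∧ l1 + l2 + 1 = l1 + l2 + l3) ∨
      (0 = l1 + l2 + l3 ∧ l1 + l2 + 1 = l1 + l2)) := by omega
  have hB : ¬((l1 + l2 + 1 = 0 + 1 ∧ 0 ≠ l1 ∧ 0 ≠ l1 + l2) ∨
      (0 = l1 + l2 + 1 + 1 ∧ l1 + l2 + 1 ≠ l1 ∧ l1 + l2 + 1 ≠ l1 + l2)) := by clear hA; omega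
  have hC : (0 = 0 ∧ (l1 + l2 + 1 = l1 + 1 ∨ l1 + l2 + 1 = l1 + l2 + 1)) ∨
      (l1 + l2 + 1 = 0 ∧ (0 = l1 + 1 ∨ 0 = l1 + l2 + 1)) := Or.inl ⟨rfl, Or.inr rfl⟩
  rw [starW_eval, if_neg hA, if_neg hB, if_pos hC]

lemma starW_e12 (l1 l2 l3 : ℕ) (p : ℝ) : starW l1 l2 l3 p l1 (l1 + l2) = -p := by
  rw [starW_eval, if_pos (Or.inl ⟨rfl, rfl⟩)]

lemma starW_e13 (l1 l2 l3 : ℕ) (p : ℝ) : starW l1 l2 l3 p l1 (l1 + l2 + l3) = -p := by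
  rw [starW_eval, if_pos (Or.inr (Or.inr (Or.inl ⟨rfl, rfl⟩)))]

lemma starW_e23 (l1 l2 l3 : ℕ) (p : ℝ) :
    starW l1 l2 l3 p (l1 + l2) (l1 + l2 + l3) = -p := by
  rw [starW_eval, if_pos (Or.inr (Or.inr (Or.inr (Or.inr (Or.inl ⟨rfl, rfl⟩)))))]

lemma starW_eq_zero (l1 l2 l3 : ℕ) (p : ℝ) (h2 : 1 ≤ l2) (h3 : 1 ≤ l3) (u v : ℕ)
    (huv : u < v)
    (h : ¬((v = u + 1 ∧ u ≠ l1 ∧ u ≠ l1 + l2) ∨ (u = 0 ∧ (v = l1 + 1 ∨ v = l1 + l2 + 1)) ∨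
      (u = l1 ∧ v = l1 + l2) ∨ (u = l1 ∧ v = l1 + l2 + l3) ∨
      (u = l1 + l2 ∧ v = l1 + l2 + l3))) :
    starW l1 l2 l3 p u v = 0 := by
  have hA : ¬((u = l1 ∧ v = l1 + l2) ∨ (u = l1 + l2 ∧ v = l1) ∨ (u = l1 ∧ v = l1 + l2 + l3) ∨
      (u = l1 + l2 + l3 ∧ v = l1) ∨ (u = l1 + l2 ∧ v = l1 + l2 + l3) ∨
      (u = l1 + l2 + l3 ∧ v = l1 + l2)) := by omega
  have hB : ¬((v = u + 1 ∧ u ≠ l1 ∧ u ≠ l1 + l2) ∨ (u = v + 1 ∧ v ≠ l1 ∧ v ≠ l1 + l2)) := by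
    clear hA; omega
  have hC : ¬((u = 0 ∧ (v = l1 + 1 ∨ v = l1 + l2 + 1)) ∨
      (v = 0 ∧ (u = l1 + 1 ∨ u = l1 + l2 + 1))) := by clear hA hB; omega
  rw [starW_eval, if_neg hA, if_neg hB, if_neg hC]

lemma cp_chain (c : ℕ → ℕ) : ∀ b a : ℕ, a ≤ b →
    (∀ u, a ≤ u → u < b → c u = c (u + 1)) → c a = c b := by
  intro b
  induction b with
  | zero =>
    intro a ha _
    have : a = 0 := by omega
    rw [this]
  | succ b ih =>
    intro a ha h
    rcases Nat.eq_or_lt_of_le ha with he | hlt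
    · rw [he]
    · have hb : a ≤ b := by omega
      rw [ih a hb (fun u hu1 hu2 => h u hu1 (by omega))]
      exact h b (by omega) (by omega)

lemma fin_sum_to_nat (N : ℕ) (f : ℕ → ℕ → ℝ) :
    (∑ i : Fin N, ∑ j : Fin N, f i.val j.val) = ∑ u ∈ range N, ∑ v ∈ range N, f u v := by
  rw [← Fin.sum_univ_eq_sum_range (fun u => ∑ v ∈ range N, f u v)]
  exact Finset.sum_congr rfl fun i _ => (Fin.sum_univ_eq_sum_range (f i.val) N)

lemma star_support_sum (l1 l2 l3 : ℕ) (h1 : 1 ≤ l1) (h2 : 1 ≤ l2) (h3 : 1 ≤ l3)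
    (f : ℕ → ℕ → ℝ)
    (hf0 : ∀ u v, ¬u < v → f u v = 0)
    (hf : ∀ u v, u < v →
      ¬((v = u + 1 ∧ u ≠ l1 ∧ u ≠ l1 + l2) ∨ (u = 0 ∧ (v = l1 + 1 ∨ v = l1 + l2 + 1)) ∨
        (u = l1 ∧ v = l1 + l2) ∨ (u = l1 ∧ v = l1 + l2 + l3) ∨
        (u = l1 + l2 ∧ v = l1 + l2 + l3)) → f u v = 0) :
    ∑ u ∈ range (l1 + l2 + l3 + 1), ∑ v ∈ range (l1 + l2 + l3 + 1), f u v
      = (∑ u ∈ (range (l1 + l2 + l3)).filter (fun u => u ≠ l1 ∧ u ≠ l1 + l2), f u (u + 1))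
        + f 0 (l1 + 1) + f 0 (l1 + l2 + 1) + f l1 (l1 + l2) + f l1 (l1 + l2 + l3)
        + f (l1 + l2) (l1 + l2 + l3) := by
  classical
  set T : Finset (ℕ × ℕ) :=
    {(0, l1 + 1), (0, l1 + l2 + 1), (l1, l1 + l2), (l1, l1 + l2 + l3),
      (l1 + l2, l1 + l2 + l3)} with hT
  set S : Finset (ℕ × ℕ) :=
    (((range (l1 + l2 + l3)).filter (fun u => u ≠ l1 ∧ u ≠ l1 + l2)).image
      (fun u => (u, u + 1))) ∪ T with hS
  have hsub : S ⊆ range (l1 + l2 + l3 + 1) ×ˢ range (l1 + l2 + l3 + 1) := by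
    intro x hx
    obtain ⟨a, b⟩ := x
    simp only [hS, hT, mem_union, mem_image, mem_filter, mem_range, mem_insert,
      mem_singleton, Prod.mk.injEq] at hx
    simp only [mem_product, mem_range]
    rcases hx with ⟨u, ⟨hu, hu1, hu2⟩, he1, he2⟩ | h | h | h | h | h <;> omega
  have hzero : ∀ x ∈ range (l1 + l2 + l3 + 1) ×ˢ range (l1 + l2 + l3 + 1),
      x ∉ S → f x.1 x.2 = 0 := by
    intro x hxP hxS
    obtain ⟨a, b⟩ := x
    by_cases hab : a < b
    · refine hf a b hab fun hedge => hxS ?_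
      simp only [mem_product, mem_range] at hxP
      simp only [hS, hT, mem_union, mem_image, mem_filter, mem_range, mem_insert,
        mem_singleton, Prod.mk.injEq]
      rcases hedge with ⟨hv, hne1, hne2⟩ | ⟨h0, hb | hb⟩ | h | h | h
      · exact Or.inl ⟨a, ⟨by omega, hne1, hne2⟩, rfl, by omega⟩
      · exact Or.inr (Or.inl ⟨h0, hb⟩)
      · exact Or.inr (Or.inr (Or.inl ⟨h0, hb⟩))
      · exact Or.inr (Or.inr (Or.inr (Or.inl h)))
      · exact Or.inr (Or.inr (Or.inr (Or.inr (Or.inl h))))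
      · exact Or.inr (Or.inr (Or.inr (Or.inr (Or.inr h))))
    · exact hf0 a b hab
  rw [← Finset.sum_product']
  rw [← Finset.sum_subset hsub hzero]
  have hdisj : Disjoint
      (((range (l1 + l2 + l3)).filter (fun u => u ≠ l1 ∧ u ≠ l1 + l2)).image
        (fun u => (u, u + 1))) T := by
    rw [Finset.disjoint_left]
    intro x hx hxT
    obtain ⟨a, b⟩ := x
    simp only [mem_image, mem_filter, mem_range, Prod.mk.injEq] at hx
    simp only [hT, mem_insert, mem_singleton, Prod.mk.injEq] at hxT
    obtain ⟨u, ⟨hu, hu1, hu2⟩, he1, he2⟩ := hx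
    omega
  have hinj : ∀ x ∈ (range (l1 + l2 + l3)).filter (fun u => u ≠ l1 ∧ u ≠ l1 + l2),
      ∀ y ∈ (range (l1 + l2 + l3)).filter (fun u => u ≠ l1 ∧ u ≠ l1 + l2),
      (fun u => (u, u + 1)) x = (fun u => (u, u + 1)) y → x = y := by
    intro x _ y _ h
    exact (Prod.mk.inj h).1
  have hTsum : ∑ x ∈ T, f x.1 x.2
      = f 0 (l1 + 1) + f 0 (l1 + l2 + 1) + f l1 (l1 + l2) + f l1 (l1 + l2 + l3)
        + f (l1 + l2) (l1 + l2 + l3) := by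
    rw [hT]
    rw [Finset.sum_insert (by simp only [mem_insert, mem_singleton, Prod.mk.injEq]; omega),
      Finset.sum_insert (by simp only [mem_insert, mem_singleton, Prod.mk.injEq]; omega),
      Finset.sum_insert (by simp only [mem_insert, mem_singleton, Prod.mk.injEq]; omega),
      Finset.sum_insert (by simp only [mem_singleton, Prod.mk.injEq]; omega),
      Finset.sum_singleton]
    ring
  rw [hS, Finset.sum_union hdisj, Finset.sum_image hinj, hTsum]
  ring

lemma filter_card_star (l1 l2 l3 : ℕ) (h1 : 1 ≤ l1) (h2 : 1 ≤ l2) (h3 : 1 ≤ l3) :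
    ((range (l1 + l2 + l3)).filter (fun u => u ≠ l1 ∧ u ≠ l1 + l2)).card
      = l1 + l2 + l3 - 2 := by
  have hset : (range (l1 + l2 + l3)).filter (fun u => u ≠ l1 ∧ u ≠ l1 + l2)
      = range (l1 + l2 + l3) \ {l1, l1 + l2} := by
    ext x
    simp only [mem_filter, mem_sdiff, mem_range, mem_insert, mem_singleton]
    omega
  rw [hset, card_sdiff_of_subset (by
    intro x hx
    simp only [mem_insert, mem_singleton] at hx
    simp only [mem_range]
    omega), card_range,
    card_insert_of_notMem (by simp only [mem_singleton]; omega), card_singleton]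

lemma cpScore_eq (l1 l2 l3 : ℕ) (p : ℝ) (C : Fin (l1 + l2 + l3 + 1) → ℕ)
    (c : ℕ → ℕ) (hc : ∀ i : Fin (l1 + l2 + l3 + 1), c i.val = C i) :
    cpScore (fun i j => starW l1 l2 l3 p i.val j.val) C
      = ∑ u ∈ range (l1 + l2 + l3 + 1), ∑ v ∈ range (l1 + l2 + l3 + 1),
          if u < v ∧ c u = c v then starW l1 l2 l3 p u v else 0 := by
  rw [← fin_sum_to_nat (l1 + l2 + l3 + 1)
    (fun u v => if u < v ∧ c u = c v then starW l1 l2 l3 p u v else 0)]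
  simp only [cpScore]
  refine Finset.sum_congr rfl fun i _ => Finset.sum_congr rfl fun j _ => ?_
  have hiff : (i < j ∧ C i = C j) ↔ (i.val < j.val ∧ c i.val = c j.val) := by
    rw [Fin.lt_def, hc i, hc j]
  exact if_congr hiff rfl rfl

lemma trivUB_eq (l1 l2 l3 : ℕ) (p : ℝ) :
    trivUB (fun i j : Fin (l1 + l2 + l3 + 1) => starW l1 l2 l3 p i.val j.val)
      = ∑ u ∈ range (l1 + l2 + l3 + 1), ∑ v ∈ range (l1 + l2 + l3 + 1),
          if u < v ∧ 0 < starW l1 l2 l3 p u v then starW l1 l2 l3 p u v else 0 := by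
  rw [← fin_sum_to_nat (l1 + l2 + l3 + 1)
    (fun u v => if u < v ∧ 0 < starW l1 l2 l3 p u v then starW l1 l2 l3 p u v else 0)]
  simp only [trivUB]
  refine Finset.sum_congr rfl fun i _ => Finset.sum_congr rfl fun j _ => ?_
  have hiff : (i < j ∧ 0 < starW l1 l2 l3 p i.val j.val)
      ↔ (i.val < j.val ∧ 0 < starW l1 l2 l3 p i.val j.val) := by
    rw [Fin.lt_def]
  exact if_congr hiff rfl rfl

lemma trivUB_eval (l1 l2 l3 : ℕ) (h1 : 1 ≤ l1) (h2 : 1 ≤ l2) (h3 : 1 ≤ l3)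
    (p : ℝ) (hp : 0 < p) :
    trivUB (fun i j : Fin (l1 + l2 + l3 + 1) => starW l1 l2 l3 p i.val j.val)
      = ((l1 + l2 + l3 : ℕ) : ℝ) * p := by
  rw [trivUB_eq l1 l2 l3 p]
  rw [star_support_sum l1 l2 l3 h1 h2 h3
    (fun u v => if u < v ∧ 0 < starW l1 l2 l3 p u v then starW l1 l2 l3 p u v else 0)
    (fun u v h => if_neg (fun hc => h hc.1))
    (fun u v huv hn => by
      show (if u < v ∧ 0 < starW l1 l2 l3 p u v then starW l1 l2 l3 p u v else 0) = 0
      rw [starW_eq_zero l1 l2 l3 p h2 h3 u v huv hn]; simp)]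
  have hfil : ∀ u ∈ (range (l1 + l2 + l3)).filter (fun u => u ≠ l1 ∧ u ≠ l1 + l2),
      (if u < u + 1 ∧ 0 < starW l1 l2 l3 p u (u + 1) then starW l1 l2 l3 p u (u + 1) else 0)
        = p := by
    intro u hu
    simp only [mem_filter, mem_range] at hu
    rw [starW_consec l1 l2 l3 p u hu.1 hu.2.1 hu.2.2, if_pos ⟨Nat.lt_succ_self u, hp⟩]
  rw [Finset.sum_congr rfl hfil, Finset.sum_const, filter_card_star l1 l2 l3 h1 h2 h3,
    starW_0e1 l1 l2 l3 p h1, starW_0e2 l1 l2 l3 p h1, starW_e12 l1 l2 l3 p,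
    starW_e13 l1 l2 l3 p, starW_e23 l1 l2 l3 p,
    if_pos (And.intro (Nat.succ_pos l1) hp),
    if_pos (And.intro (by omega : 0 < l1 + l2 + 1) hp),
    if_neg (fun h => absurd h.2 (by linarith) : ¬(l1 < l1 + l2 ∧ 0 < -p)),
    if_neg (fun h => absurd h.2 (by linarith) : ¬(l1 < l1 + l2 + l3 ∧ 0 < -p)),
    if_neg (fun h => absurd h.2 (by linarith) : ¬(l1 + l2 < l1 + l2 + l3 ∧ 0 < -p)),
    nsmul_eq_mul, Nat.cast_sub (by omega : 2 ≤ l1 + l2 + l3)]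
  push_cast
  ring

/-- The optimal partition: cluster by path. -/
def cstar (l1 l2 : ℕ) (u : ℕ) : ℕ := if u ≤ l1 then 0 else if u ≤ l1 + l2 then 1 else 2

lemma score_opt (l1 l2 l3 : ℕ) (h1 : 1 ≤ l1) (h2 : 1 ≤ l2) (h3 : 1 ≤ l3) (p : ℝ) :
    cpScore (fun i j => starW l1 l2 l3 p i.val j.val)
        (fun v : Fin (l1 + l2 + l3 + 1) => cstar l1 l2 v.val)
      = (((l1 + l2 + l3 : ℕ) : ℝ) - 2) * p := by
  rw [cpScore_eq l1 l2 l3 p _ (cstar l1 l2) (fun i => rfl)]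
  rw [star_support_sum l1 l2 l3 h1 h2 h3
    (fun u v => if u < v ∧ cstar l1 l2 u = cstar l1 l2 v then starW l1 l2 l3 p u v else 0)
    (fun u v h => if_neg (fun hc => h hc.1))
    (fun u v huv hn => by
      show (if u < v ∧ cstar l1 l2 u = cstar l1 l2 v then starW l1 l2 l3 p u v else 0) = 0
      rw [starW_eq_zero l1 l2 l3 p h2 h3 u v huv hn]; simp)]
  have hfil : ∀ u ∈ (range (l1 + l2 + l3)).filter (fun u => u ≠ l1 ∧ u ≠ l1 + l2),
      (if u < u + 1 ∧ cstar l1 l2 u = cstar l1 l2 (u + 1)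
        then starW l1 l2 l3 p u (u + 1) else 0) = p := by
    intro u hu
    simp only [mem_filter, mem_range] at hu
    have hcc : cstar l1 l2 u = cstar l1 l2 (u + 1) := by
      have := hu.2.1
      have := hu.2.2
      unfold cstar
      split_ifs <;> omega
    rw [starW_consec l1 l2 l3 p u hu.1 hu.2.1 hu.2.2, if_pos ⟨Nat.lt_succ_self u, hcc⟩]
  have t1 : ¬(0 < l1 + 1 ∧ cstar l1 l2 0 = cstar l1 l2 (l1 + 1)) := by
    intro hcc
    have hx := hcc.2
    unfold cstar at hx
    split_ifs at hx <;> omega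
  have t2 : ¬(0 < l1 + l2 + 1 ∧ cstar l1 l2 0 = cstar l1 l2 (l1 + l2 + 1)) := by
    intro hcc
    have hx := hcc.2
    unfold cstar at hx
    split_ifs at hx <;> omega
  have t3 : ¬(l1 < l1 + l2 ∧ cstar l1 l2 l1 = cstar l1 l2 (l1 + l2)) := by
    intro hcc
    have hx := hcc.2
    unfold cstar at hx
    split_ifs at hx <;> omega
  have t4 : ¬(l1 < l1 + l2 + l3 ∧ cstar l1 l2 l1 = cstar l1 l2 (l1 + l2 + l3)) := by
    intro hcc
    have hx := hcc.2
    unfold cstar at hx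
    split_ifs at hx <;> omega
  have t5 : ¬(l1 + l2 < l1 + l2 + l3 ∧ cstar l1 l2 (l1 + l2) = cstar l1 l2 (l1 + l2 + l3)) := by
    intro hcc
    have hx := hcc.2
    unfold cstar at hx
    split_ifs at hx <;> omega
  rw [Finset.sum_congr rfl hfil, Finset.sum_const, filter_card_star l1 l2 l3 h1 h2 h3,
    if_neg t1, if_neg t2, if_neg t3, if_neg t4, if_neg t5,
    nsmul_eq_mul, Nat.cast_sub (by omega : 2 ≤ l1 + l2 + l3)]
  push_cast
  ring

lemma pair_ne_of_w (l1 l2 l3 : ℕ) (p : ℝ) (hp : 0 < p) {a b a' b' : ℕ}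
    (h : starW l1 l2 l3 p a b = p) (h' : starW l1 l2 l3 p a' b' = -p) :
    (a, b) ≠ (a', b') := by
  intro hEq
  rw [Prod.mk.injEq] at hEq
  rw [hEq.1, hEq.2, h'] at h
  linarith

lemma pathCut1 (l1 l2 l3 : ℕ) (p : ℝ) (c : ℕ → ℕ) (h : c 0 ≠ c l1) :
    ∃ a b : ℕ, a < b ∧ b ≤ l1 ∧ starW l1 l2 l3 p a b = p ∧ c a ≠ c b := by
  have hnall : ¬∀ u, 0 ≤ u → u < l1 → c u = c (u + 1) :=
    fun hall => h (cp_chain c l1 0 (Nat.zero_le _) hall)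
  push_neg at hnall
  obtain ⟨u, _, hu, hcut⟩ := hnall
  exact ⟨u, u + 1, Nat.lt_succ_self u, by omega,
    starW_consec l1 l2 l3 p u (by omega) (by omega) (by omega), hcut⟩

lemma pathCut2 (l1 l2 l3 : ℕ) (h1 : 1 ≤ l1) (h2 : 1 ≤ l2) (p : ℝ) (c : ℕ → ℕ)
    (h : c 0 ≠ c (l1 + l2)) :
    ∃ a b : ℕ, a < b ∧ l1 < b ∧ b ≤ l1 + l2 ∧ starW l1 l2 l3 p a b = p ∧ c a ≠ c b := by
  by_cases h0 : c 0 = c (l1 + 1)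
  · have hnall : ¬∀ u, l1 + 1 ≤ u → u < l1 + l2 → c u = c (u + 1) :=
      fun hall => h (h0.trans (cp_chain c (l1 + l2) (l1 + 1) (by omega) hall))
    push_neg at hnall
    obtain ⟨u, hu1, hu2, hcut⟩ := hnall
    exact ⟨u, u + 1, Nat.lt_succ_self u, by omega, by omega,
      starW_consec l1 l2 l3 p u (by omega) (by omega) (by omega), hcut⟩
  · exact ⟨0, l1 + 1, by omega, by omega, by omega, starW_0e1 l1 l2 l3 p h1, h0⟩

lemma pathCut3 (l1 l2 l3 : ℕ) (h1 : 1 ≤ l1) (h3 : 1 ≤ l3) (p : ℝ) (c : ℕ → ℕ)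
    (h : c 0 ≠ c (l1 + l2 + l3)) :
    ∃ a b : ℕ, a < b ∧ l1 + l2 < b ∧ b ≤ l1 + l2 + l3 ∧
      starW l1 l2 l3 p a b = p ∧ c a ≠ c b := by
  by_cases h0 : c 0 = c (l1 + l2 + 1)
  · have hnall : ¬∀ u, l1 + l2 + 1 ≤ u → u < l1 + l2 + l3 → c u = c (u + 1) :=
      fun hall => h (h0.trans (cp_chain c (l1 + l2 + l3) (l1 + l2 + 1) (by omega) hall))
    push_neg at hnall
    obtain ⟨u, hu1, hu2, hcut⟩ := hnall
    exact ⟨u, u + 1, Nat.lt_succ_self u, by omega, by omega,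
      starW_consec l1 l2 l3 p u (by omega) (by omega) (by omega), hcut⟩
  · exact ⟨0, l1 + l2 + 1, by omega, by omega, by omega, starW_0e2 l1 l2 l3 p h1, h0⟩

lemma two_penalties (l1 l2 l3 : ℕ) (h1 : 1 ≤ l1) (h2 : 1 ≤ l2) (h3 : 1 ≤ l3)
    (p : ℝ) (hp : 0 < p) (c : ℕ → ℕ) :
    ∃ a b a' b' : ℕ, (a, b) ≠ ((a', b') : ℕ × ℕ) ∧
      a < b ∧ b ≤ l1 + l2 + l3 ∧ a' < b' ∧ b' ≤ l1 + l2 + l3 ∧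
      (starW l1 l2 l3 p a b = p ∧ c a ≠ c b ∨ starW l1 l2 l3 p a b = -p ∧ c a = c b) ∧
      (starW l1 l2 l3 p a' b' = p ∧ c a' ≠ c b' ∨
        starW l1 l2 l3 p a' b' = -p ∧ c a' = c b') := by
  by_cases h12 : c l1 = c (l1 + l2)
  · by_cases h13 : c l1 = c (l1 + l2 + l3)
    · refine ⟨l1, l1 + l2, l1, l1 + l2 + l3, ?_, by omega, by omega, by omega, by omega,
        Or.inr ⟨starW_e12 l1 l2 l3 p, h12⟩, Or.inr ⟨starW_e13 l1 l2 l3 p, h13⟩⟩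
      intro hEq
      rw [Prod.mk.injEq] at hEq
      omega
    · by_cases h01 : c 0 = c l1
      · have h03 : c 0 ≠ c (l1 + l2 + l3) := fun h => h13 (h01.symm.trans h)
        obtain ⟨a, b, hab, _, hb2, hwp, hcut⟩ := pathCut3 l1 l2 l3 h1 h3 p c h03
        exact ⟨a, b, l1, l1 + l2,
          pair_ne_of_w l1 l2 l3 p hp hwp (starW_e12 l1 l2 l3 p),
          hab, hb2, by omega, by omega, Or.inl ⟨hwp, hcut⟩,
          Or.inr ⟨starW_e12 l1 l2 l3 p, h12⟩⟩
      · obtain ⟨a, b, hab, hb, hwp, hcut⟩ := pathCut1 l1 l2 l3 p c h01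
        exact ⟨a, b, l1, l1 + l2,
          pair_ne_of_w l1 l2 l3 p hp hwp (starW_e12 l1 l2 l3 p),
          hab, by omega, by omega, by omega, Or.inl ⟨hwp, hcut⟩,
          Or.inr ⟨starW_e12 l1 l2 l3 p, h12⟩⟩
  · by_cases h13 : c l1 = c (l1 + l2 + l3)
    · by_cases h01 : c 0 = c l1
      · have h02 : c 0 ≠ c (l1 + l2) := fun h => h12 (h01.symm.trans h)
        obtain ⟨a, b, hab, _, hb2, hwp, hcut⟩ := pathCut2 l1 l2 l3 h1 h2 p c h02
        exact ⟨a, b, l1, l1 + l2 + l3,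
          pair_ne_of_w l1 l2 l3 p hp hwp (starW_e13 l1 l2 l3 p),
          hab, by omega, by omega, by omega, Or.inl ⟨hwp, hcut⟩,
          Or.inr ⟨starW_e13 l1 l2 l3 p, h13⟩⟩
      · obtain ⟨a, b, hab, hb, hwp, hcut⟩ := pathCut1 l1 l2 l3 p c h01
        exact ⟨a, b, l1, l1 + l2 + l3,
          pair_ne_of_w l1 l2 l3 p hp hwp (starW_e13 l1 l2 l3 p),
          hab, by omega, by omega, by omega, Or.inl ⟨hwp, hcut⟩,
          Or.inr ⟨starW_e13 l1 l2 l3 p, h13⟩⟩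
    · by_cases h23 : c (l1 + l2) = c (l1 + l2 + l3)
      · by_cases h01 : c 0 = c l1
        · have h02 : c 0 ≠ c (l1 + l2) := fun h => h12 (h01.symm.trans h)
          obtain ⟨a, b, hab, _, hb2, hwp, hcut⟩ := pathCut2 l1 l2 l3 h1 h2 p c h02
          exact ⟨a, b, l1 + l2, l1 + l2 + l3,
            pair_ne_of_w l1 l2 l3 p hp hwp (starW_e23 l1 l2 l3 p),
            hab, by omega, by omega, by omega, Or.inl ⟨hwp, hcut⟩,
            Or.inr ⟨starW_e23 l1 l2 l3 p, h23⟩⟩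
        · obtain ⟨a, b, hab, hb, hwp, hcut⟩ := pathCut1 l1 l2 l3 p c h01
          exact ⟨a, b, l1 + l2, l1 + l2 + l3,
            pair_ne_of_w l1 l2 l3 p hp hwp (starW_e23 l1 l2 l3 p),
            hab, by omega, by omega, by omega, Or.inl ⟨hwp, hcut⟩,
            Or.inr ⟨starW_e23 l1 l2 l3 p, h23⟩⟩
      · by_cases h01 : c 0 = c l1
        · have h02 : c 0 ≠ c (l1 + l2) := fun h => h12 (h01.symm.trans h)
          have h03 : c 0 ≠ c (l1 + l2 + l3) := fun h => h13 (h01.symm.trans h)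
          obtain ⟨a, b, hab, hb1, hb2, hwp, hcut⟩ := pathCut2 l1 l2 l3 h1 h2 p c h02
          obtain ⟨a', b', hab', hb1', hb2', hwp', hcut'⟩ := pathCut3 l1 l2 l3 h1 h3 p c h03
          refine ⟨a, b, a', b', ?_, hab, by omega, hab', hb2',
            Or.inl ⟨hwp, hcut⟩, Or.inl ⟨hwp', hcut'⟩⟩
          intro hEq
          rw [Prod.mk.injEq] at hEq
          omega
        · by_cases h02 : c 0 = c (l1 + l2)
          · have h03 : c 0 ≠ c (l1 + l2 + l3) := fun h => h23 (h02.symm.trans h)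
            obtain ⟨a, b, hab, hb, hwp, hcut⟩ := pathCut1 l1 l2 l3 p c h01
            obtain ⟨a', b', hab', hb1', hb2', hwp', hcut'⟩ := pathCut3 l1 l2 l3 h1 h3 p c h03
            refine ⟨a, b, a', b', ?_, hab, by omega, hab', hb2',
              Or.inl ⟨hwp, hcut⟩, Or.inl ⟨hwp', hcut'⟩⟩
            intro hEq
            rw [Prod.mk.injEq] at hEq
            omega
          · obtain ⟨a, b, hab, hb, hwp, hcut⟩ := pathCut1 l1 l2 l3 p c h01
            obtain ⟨a', b', hab', hb1', hb2', hwp', hcut'⟩ := pathCut2 l1 l2 l3 h1 h2 p c h02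
            refine ⟨a, b, a', b', ?_, hab, by omega, hab', by omega,
              Or.inl ⟨hwp, hcut⟩, Or.inl ⟨hwp', hcut'⟩⟩
            intro hEq
            rw [Prod.mk.injEq] at hEq
            omega

lemma d_nonneg (w : ℝ) (P Q : Prop) [Decidable P] [Decidable Q] :
    0 ≤ (if P ∧ 0 < w then w else 0) - (if P ∧ Q then w else 0) := by
  split_ifs with hA hB hB
  · linarith
  · linarith [hA.2]
  · have hw : ¬0 < w := fun h => hA ⟨hB.1, h⟩
    linarith
  · linarith

lemma d_term (p : ℝ) (hp : 0 < p) (w : ℝ) (a b : ℕ) (c : ℕ → ℕ) (hab : a < b)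
    (hw : w = p ∧ c a ≠ c b ∨ w = -p ∧ c a = c b) :
    p ≤ (if a < b ∧ 0 < w then w else 0) - (if a < b ∧ c a = c b then w else 0) := by
  rcases hw with ⟨rfl, hne⟩ | ⟨rfl, heq⟩
  · rw [if_pos ⟨hab, hp⟩, if_neg (fun h => hne h.2)]
    linarith
  · rw [if_neg (fun h => absurd h.2 (by linarith)), if_pos ⟨hab, heq⟩]
    linarith

lemma score_le (l1 l2 l3 : ℕ) (h1 : 1 ≤ l1) (h2 : 1 ≤ l2) (h3 : 1 ≤ l3)
    (p : ℝ) (hp : 0 < p) (C : Fin (l1 + l2 + l3 + 1) → ℕ) :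
    cpScore (fun i j => starW l1 l2 l3 p i.val j.val) C
      ≤ (((l1 + l2 + l3 : ℕ) : ℝ) - 2) * p := by
  classical
  set c : ℕ → ℕ := fun u => if h : u < l1 + l2 + l3 + 1 then C ⟨u, h⟩ else 0 with hcdef
  have hc : ∀ i : Fin (l1 + l2 + l3 + 1), c i.val = C i := by
    intro i
    rw [hcdef]
    simp only []
    rw [dif_pos i.isLt]
  have hscore := cpScore_eq l1 l2 l3 p C c hc
  have hT : (∑ u ∈ range (l1 + l2 + l3 + 1), ∑ v ∈ range (l1 + l2 + l3 + 1),
      if u < v ∧ 0 < starW l1 l2 l3 p u v then starW l1 l2 l3 p u v else 0)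
      = ((l1 + l2 + l3 : ℕ) : ℝ) * p := by
    rw [← trivUB_eq l1 l2 l3 p]
    exact trivUB_eval l1 l2 l3 h1 h2 h3 p hp
  obtain ⟨a, b, a', b', hne, hab, hbL, hab', hbL', hw, hw'⟩ :=
    two_penalties l1 l2 l3 h1 h2 h3 p hp c
  have key : 2 * p ≤
      (∑ u ∈ range (l1 + l2 + l3 + 1), ∑ v ∈ range (l1 + l2 + l3 + 1),
        if u < v ∧ 0 < starW l1 l2 l3 p u v then starW l1 l2 l3 p u v else 0)
      - (∑ u ∈ range (l1 + l2 + l3 + 1), ∑ v ∈ range (l1 + l2 + l3 + 1),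
        if u < v ∧ c u = c v then starW l1 l2 l3 p u v else 0) := by
    have hsum : (∑ x ∈ range (l1 + l2 + l3 + 1) ×ˢ range (l1 + l2 + l3 + 1),
        ((if x.1 < x.2 ∧ 0 < starW l1 l2 l3 p x.1 x.2 then starW l1 l2 l3 p x.1 x.2 else 0)
          - (if x.1 < x.2 ∧ c x.1 = c x.2 then starW l1 l2 l3 p x.1 x.2 else 0)))
        = (∑ u ∈ range (l1 + l2 + l3 + 1), ∑ v ∈ range (l1 + l2 + l3 + 1),
            if u < v ∧ 0 < starW l1 l2 l3 p u v then starW l1 l2 l3 p u v else 0)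
          - (∑ u ∈ range (l1 + l2 + l3 + 1), ∑ v ∈ range (l1 + l2 + l3 + 1),
            if u < v ∧ c u = c v then starW l1 l2 l3 p u v else 0) := by
      rw [Finset.sum_sub_distrib,
        Finset.sum_product'
          (f := fun u v => if u < v ∧ 0 < starW l1 l2 l3 p u v then starW l1 l2 l3 p u v else 0),
        Finset.sum_product'
          (f := fun u v => if u < v ∧ c u = c v then starW l1 l2 l3 p u v else 0)]
    rw [← hsum]
    have hsub2 : ({(a, b), (a', b')} : Finset (ℕ × ℕ))
        ⊆ range (l1 + l2 + l3 + 1) ×ˢ range (l1 + l2 + l3 + 1) := by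
      intro x hx
      simp only [mem_insert, mem_singleton] at hx
      rcases hx with rfl | rfl <;>
        (simp only [mem_product, mem_range]; constructor <;> omega)
    have hmono := Finset.sum_le_sum_of_subset_of_nonneg hsub2
      (fun x _ _ => d_nonneg (starW l1 l2 l3 p x.1 x.2) (x.1 < x.2) (c x.1 = c x.2))
    rw [Finset.sum_pair hne] at hmono
    have hd1 := d_term p hp (starW l1 l2 l3 p a b) a b c hab hw
    have hd2 := d_term p hp (starW l1 l2 l3 p a' b') a' b' c hab' hw'
    have hexp : ((if a < b ∧ 0 < starW l1 l2 l3 p a b then starW l1 l2 l3 p a b else 0)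
          - (if a < b ∧ c a = c b then starW l1 l2 l3 p a b else 0))
        + ((if a' < b' ∧ 0 < starW l1 l2 l3 p a' b' then starW l1 l2 l3 p a' b' else 0)
          - (if a' < b' ∧ c a' = c b' then starW l1 l2 l3 p a' b' else 0))
        ≤ ∑ x ∈ range (l1 + l2 + l3 + 1) ×ˢ range (l1 + l2 + l3 + 1),
            ((if x.1 < x.2 ∧ 0 < starW l1 l2 l3 p x.1 x.2 then starW l1 l2 l3 p x.1 x.2 else 0)
              - (if x.1 < x.2 ∧ c x.1 = c x.2 then starW l1 l2 l3 p x.1 x.2 else 0)) :=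
      hmono
    linarith
  rw [hscore]
  have hexp2 : (((l1 + l2 + l3 : ℕ) : ℝ) - 2) * p
      = ((l1 + l2 + l3 : ℕ) : ℝ) * p - 2 * p := by ring
  rw [hexp2]
  linarith

/-- **Star penalty.** For `p > 0` and path lengths `l1, l2, l3 ≥ 1` with
`L = l1 + l2 + l3`, the maximum partition score of the reduced star equals
`(L - 2)·p`; equivalently, its penalty is exactly `2·p`. -/
theorem star_penalty (l1 l2 l3 : ℕ) (h1 : 1 ≤ l1) (h2 : 1 ≤ l2) (h3 : 1 ≤ l3)
    (p : ℝ) (hp : 0 < p) :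
    IsGreatest
      {q : ℝ | ∃ C : Fin (l1 + l2 + l3 + 1) → ℕ,
        q = cpScore (fun i j => starW l1 l2 l3 p i.val j.val) C}
      ((((l1 + l2 + l3 : ℕ) : ℝ) - 2) * p) ∧
    trivUB (fun i j : Fin (l1 + l2 + l3 + 1) => starW l1 l2 l3 p i.val j.val)
      - (((l1 + l2 + l3 : ℕ) : ℝ) - 2) * p = 2 * p := by
  refine ⟨⟨⟨fun v => cstar l1 l2 v.val, (score_opt l1 l2 l3 h1 h2 h3 p).symm⟩, ?_⟩, ?_⟩
  · rintro q ⟨C, rfl⟩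
    exact score_le l1 l2 l3 h1 h2 h3 p hp C
  · rw [trivUB_eval l1 l2 l3 h1 h2 h3 p hp]
    ring
end

section
/- LP value of the simple star: Fix p > 0 and consider the weighted complete graph on four vertices m, i, j, k with w(m,i) = w(m,j) = w(m,k) = p, w(i,j) = w(i,k) = w(j,k) = −p. Then the optimal value of the LP relaxation equals (3/2)·p: every LP-feasible point x has objective value ∑_{u < v} w u v · x u v ≤ (3/2)·p, and some LP-feasible point attains (3/2)·p (e.g., x(m,i) = x(m,j) = x(m,k) = 1/2 and x(i,j) = x(i,k) = x(j,k) = 0). In particular the LP optimum strictly exceeds the maximum partition score, which equals p. -/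
open Finset

/-- An LP-feasible point: symmetric, entries in `[0,1]`, satisfying the triangle
inequalities of the LP relaxation of the clique partitioning ILP. -/
def LPFeasible {n : ℕ} (x : Fin n → Fin n → ℝ) : Prop :=
  (∀ i j, x i j = x j i) ∧
  (∀ i j : Fin n, i < j → 0 ≤ x i j ∧ x i j ≤ 1) ∧
  (∀ i j k : Fin n, i < j → j < k →
    x i j + x j k - x i k ≤ 1 ∧ x i j - x j k + x i k ≤ 1 ∧ -x i j + x j k + x i k ≤ 1)

/-- LP objective value `∑_{i<j} w i j * x i j`. -/
noncomputable def lpObj {n : ℕ} (w x : Fin n → Fin n → ℝ) : ℝ :=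
  ∑ i : Fin n, ∑ j : Fin n, if i < j then w i j * x i j else 0

/-- The simple star on four vertices `m = 0`, `i = 1`, `j = 2`, `k = 3`:
`w(m,i) = w(m,j) = w(m,k) = p` and `w(i,j) = w(i,k) = w(j,k) = -p`. -/
noncomputable def star4W (p : ℝ) : Fin 4 → Fin 4 → ℝ := fun i j =>
  if i = j then 0 else if i.val = 0 ∨ j.val = 0 then p else -p

set_option maxHeartbeats 1000000 in
/-- **LP value of the simple star.** For `p > 0`, the optimal value of the LP
relaxation on the simple star equals `(3/2)·p` (every LP-feasible point has objective
at most `(3/2)·p` and some LP-feasible point attains it), while the maximum partition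
score equals `p`; in particular the LP optimum strictly exceeds the maximum partition
score. -/
theorem simple_star_LP_value (p : ℝ) (hp : 0 < p) :
    IsGreatest {v : ℝ | ∃ x : Fin 4 → Fin 4 → ℝ, LPFeasible x ∧ v = lpObj (star4W p) x}
      (3 / 2 * p) ∧
    IsGreatest {q : ℝ | ∃ C : Fin 4 → ℕ, q = cpScore (star4W p) C} p ∧
    p < 3 / 2 * p := by
  refine ⟨⟨⟨fun i j => if i = j then 0 else if i.val = 0 ∨ j.val = 0 then 1/2 else 0, ?_, ?_⟩, ?_⟩,
    ⟨⟨fun i => if i.val ≤ 1 then 0 else i.val, ?_⟩, ?_⟩, by linarith⟩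
  · refine ⟨fun i j => ?_, fun i j hij => ?_, fun i j k hij hjk => ?_⟩
    · fin_cases i <;> fin_cases j <;> simp (config := { decide := true }) <;> norm_num
    · fin_cases i <;> fin_cases j <;>
        simp_all (config := { decide := true }) <;> norm_num
    · fin_cases i <;> fin_cases j <;> fin_cases k <;>
        simp_all (config := { decide := true }) <;> norm_num
  · simp only [lpObj, star4W, Fin.sum_univ_four]
    simp (config := { decide := true }) only []
    norm_num
    ring
  · rintro v ⟨x, ⟨hsym, hbd, htri⟩, rfl⟩
    have h12 := (hbd 1 2 (by decide)).1
    have h13 := (hbd 1 3 (by decide)).1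
    have h23 := (hbd 2 3 (by decide)).1
    have t1 := (htri 0 1 2 (by decide) (by decide)).2.1
    have t2 := (htri 0 1 3 (by decide) (by decide)).2.1
    have t3 := (htri 0 2 3 (by decide) (by decide)).2.1
    simp only [lpObj, star4W, Fin.sum_univ_four]
    simp (config := { decide := true }) only []
    norm_num
    nlinarith [mul_nonneg hp.le h12, mul_nonneg hp.le h13, mul_nonneg hp.le h23]
  · simp only [cpScore, star4W, Fin.sum_univ_four]
    simp (config := { decide := true }) only []
    norm_num
  · rintro q ⟨C, rfl⟩
    simp only [cpScore, star4W, Fin.sum_univ_four]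
    simp (config := { decide := true }) only []
    norm_num
    split_ifs <;> first | linarith | omega
end

section
/- Corollary (LP relaxation is at least as tight as subnetwork-combination bounds): Let w be a symmetric weight function on n vertices and let w*¹, …, w*ᵐ be subnetworks of w with λ_1, …, λ_m ≥ 0 satisfying ∑_k λ_k · |w*ᵏ i j| ≤ |w i j| for all i < j. Suppose for each k and every LP-feasible point x on n vertices we have ∑_{i < j} w*ᵏ i j · x i j ≤ Q̄(w*ᵏ) − p_k (as holds with p_k the penalty when w*ᵏ is a chain). Then every LP-feasible point x satisfies ∑_{i < j} w i j · x i j ≤ Q̄(w) − ∑_k λ_k · p_k. -/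
open Finset

lemma edge_ineq {m : ℕ} (a : ℝ) (b : Fin m → ℝ) (lam : Fin m → ℝ)
    (hlam : ∀ k, 0 ≤ lam k) (hsign : ∀ k, 0 ≤ b k * a)
    (hperm : ∑ k, lam k * |b k| ≤ |a|) (x : ℝ) (hx0 : 0 ≤ x) (hx1 : x ≤ 1) :
    a * x - ∑ k, lam k * (b k * x) ≤
      (if 0 < a then a else 0) - ∑ k, lam k * (if 0 < b k then b k else 0) := by
  have hS : ∑ k, lam k * (b k * x) = (∑ k, lam k * b k) * x := by
    rw [Finset.sum_mul]; exact Finset.sum_congr rfl fun k _ => by ring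
  rw [hS]
  rcases lt_trichotomy a 0 with ha | ha | ha
  · -- a < 0 : all b k ≤ 0
    have hb : ∀ k, b k ≤ 0 := fun k => by nlinarith [hsign k]
    have h1 : ∑ k, lam k * (if 0 < b k then b k else 0) = 0 := by
      refine Finset.sum_eq_zero fun k _ => ?_
      rw [if_neg (by exact not_lt.2 (hb k))]; ring
    have h2 : a ≤ ∑ k, lam k * b k := by
      have : ∑ k, lam k * b k = -(∑ k, lam k * |b k|) := by
        rw [← Finset.sum_neg_distrib]
        exact Finset.sum_congr rfl fun k _ => by rw [abs_of_nonpos (hb k)]; ring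
      rw [this, abs_of_neg ha] at *
      linarith [hperm]
    rw [if_neg (by linarith), h1]
    nlinarith
  · -- a = 0 : each lam k * |b k| = 0
    subst ha
    have hz : ∀ k ∈ Finset.univ, lam k * |b k| = 0 := by
      intro k _
      have h0 : ∑ k, lam k * |b k| = 0 := le_antisymm (by simpa using hperm)
        (Finset.sum_nonneg fun k _ => mul_nonneg (hlam k) (abs_nonneg _))
      have := (Finset.sum_eq_zero_iff_of_nonneg
        (fun k _ => mul_nonneg (hlam k) (abs_nonneg _))).1 h0
      exact this k (Finset.mem_univ k)
    have h1 : ∑ k, lam k * (if 0 < b k then b k else 0) = 0 := by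
      refine Finset.sum_eq_zero fun k hk => ?_
      have := hz k hk
      split_ifs with h
      · rcases mul_eq_zero.1 this with h' | h'
        · rw [h']; ring
        · exact absurd h' (abs_ne_zero.2 (ne_of_gt h))
      · ring
    have h2 : ∑ k, lam k * b k = 0 := by
      refine Finset.sum_eq_zero fun k hk => ?_
      have := hz k hk
      rcases mul_eq_zero.1 this with h' | h'
      · rw [h']; ring
      · rw [abs_eq_zero.1 h']; ring
    rw [if_neg (lt_irrefl (0:ℝ)), h1, h2]; norm_num
  · -- a > 0 : all b k ≥ 0
    have hb : ∀ k, 0 ≤ b k := fun k => by nlinarith [hsign k]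
    have h1 : ∑ k, lam k * (if 0 < b k then b k else 0) = ∑ k, lam k * b k := by
      refine Finset.sum_congr rfl fun k _ => ?_
      rcases (hb k).lt_or_eq with h | h
      · rw [if_pos h]
      · rw [if_neg (by rw [← h]; exact lt_irrefl 0), ← h]
    have h2 : ∑ k, lam k * b k ≤ a := by
      have : ∑ k, lam k * b k = ∑ k, lam k * |b k| := by
        exact Finset.sum_congr rfl fun k _ => by rw [abs_of_nonneg (hb k)]
      rw [this]; rw [abs_of_pos ha] at hperm; exact hperm
    rw [if_pos ha, h1]
    nlinarith

/-- **LP relaxation is at least as tight as subnetwork-combination bounds.** If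
`ws k` are subnetworks of `w`, `lam k ≥ 0` form a permissible linear combination
(`∑ k lam k * |ws k i j| ≤ |w i j|` for `i < j`), and every LP-feasible point `x`
satisfies `∑_{i<j} ws k i j * x i j ≤ Q̄(ws k) - p k` for each `k`, then every
LP-feasible point `x` satisfies `∑_{i<j} w i j * x i j ≤ Q̄(w) - ∑ k lam k * p k`. -/
theorem LP_at_least_as_tight_as_subnetworks {n m : ℕ} (w : Fin n → Fin n → ℝ)
    (hw : ∀ i j, w i j = w j i)
    (ws : Fin m → Fin n → Fin n → ℝ)
    (hsub : ∀ k, IsSubnetwork w (ws k))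
    (lam : Fin m → ℝ) (hlam : ∀ k, 0 ≤ lam k)
    (hperm : ∀ i j : Fin n, i < j → ∑ k, lam k * |ws k i j| ≤ |w i j|)
    (p : Fin m → ℝ)
    (hLPk : ∀ k, ∀ x : Fin n → Fin n → ℝ, LPFeasible x →
      lpObj (ws k) x ≤ trivUB (ws k) - p k)
    (x : Fin n → Fin n → ℝ) (hx : LPFeasible x) :
    lpObj w x ≤ trivUB w - ∑ k, lam k * p k := by
  
  have hL : ∑ k, lam k * lpObj (ws k) x
      = ∑ i : Fin n, ∑ j : Fin n,
          if i < j then ∑ k, lam k * (ws k i j * x i j) else 0 := by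
    simp_rw [lpObj, Finset.mul_sum, mul_ite, mul_zero]
    rw [Finset.sum_comm]
    refine Finset.sum_congr rfl fun i _ => ?_
    rw [Finset.sum_comm]
    refine Finset.sum_congr rfl fun j _ => ?_
    split_ifs with h <;> simp
  have hT : ∑ k, lam k * trivUB (ws k)
      = ∑ i : Fin n, ∑ j : Fin n,
          if i < j then ∑ k, lam k * (if 0 < ws k i j then ws k i j else 0) else 0 := by
    simp_rw [trivUB, Finset.mul_sum, ite_and, mul_ite, mul_zero]
    rw [Finset.sum_comm]
    refine Finset.sum_congr rfl fun i _ => ?_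
    rw [Finset.sum_comm]
    refine Finset.sum_congr rfl fun j _ => ?_
    split_ifs with h <;> simp
  have hTW : trivUB w = ∑ i : Fin n, ∑ j : Fin n,
      if i < j then (if 0 < w i j then w i j else 0) else 0 := by
    simp_rw [trivUB, ite_and]
  have key : lpObj w x - ∑ k, lam k * lpObj (ws k) x
      ≤ trivUB w - ∑ k, lam k * trivUB (ws k) := by
    rw [hL, hT, hTW]
    unfold lpObj
    rw [← Finset.sum_sub_distrib, ← Finset.sum_sub_distrib]
    refine Finset.sum_le_sum fun i _ => ?_
    rw [← Finset.sum_sub_distrib, ← Finset.sum_sub_distrib]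
    refine Finset.sum_le_sum fun j _ => ?_
    by_cases h : i < j
    · rw [if_pos h, if_pos h, if_pos h, if_pos h]
      exact edge_ineq _ _ lam hlam (fun k => ((hsub k).2 i j h).2) (hperm i j h)
        _ (hx.2.1 i j h).1 (hx.2.1 i j h).2
    · simp [h]
  have hk : ∑ k, lam k * p k ≤ ∑ k, lam k * (trivUB (ws k) - lpObj (ws k) x) :=
    Finset.sum_le_sum fun k _ =>
      mul_le_mul_of_nonneg_left (by linarith [hLPk k x hx]) (hlam k)
  simp_rw [mul_sub] at hk
  rw [Finset.sum_sub_distrib] at hk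
  linarith [key, hk]
end

section
/- Modularity maximization is a clique partitioning problem: Let w̄ : Fin n → Fin n → ℝ be the (possibly asymmetric) weight function of a directed network, let T = ∑_{i,j} w̄ i j with T ≠ 0, sᵢⁱⁿ = ∑_j w̄ i j and sⱼᵒᵘᵗ = ∑_i w̄ i j. Define the symmetric weights w i j = w̄ i j / T − sᵢⁱⁿ·sⱼᵒᵘᵗ / T² + w̄ j i / T − sⱼⁱⁿ·sᵢᵒᵘᵗ / T². Then for every partition C : Fin n → ℕ, the modularity Q(C) = (1/T)·∑_{i,j : C i = C j} (w̄ i j − sᵢⁱⁿ·sⱼᵒᵘᵗ / T) equals ∑_{i < j, C i = C j} w i j + D, where D = (1/T)·∑_i (w̄ i i − sᵢⁱⁿ·sᵢᵒᵘᵗ / T) is a constant independent of C. In particular, a partition maximizes modularity if and only if it maximizes the clique partitioning score ∑_{i < j, C i = C j} w i j. -/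
open Finset

/-- Total weight `T = ∑_{i,j} w̄ i j` of a directed weighted network. -/
noncomputable def totalW {n : ℕ} (wb : Fin n → Fin n → ℝ) : ℝ :=
  ∑ i : Fin n, ∑ j : Fin n, wb i j

/-- In-strength `sᵢⁱⁿ = ∑_j w̄ i j`. -/
noncomputable def sIn {n : ℕ} (wb : Fin n → Fin n → ℝ) (i : Fin n) : ℝ :=
  ∑ j : Fin n, wb i j

/-- Out-strength `sⱼᵒᵘᵗ = ∑_i w̄ i j`. -/
noncomputable def sOut {n : ℕ} (wb : Fin n → Fin n → ℝ) (j : Fin n) : ℝ :=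
  ∑ i : Fin n, wb i j

/-- Modularity of a partition `C`:
`Q(C) = (1/T) ∑_{i,j : C i = C j} (w̄ i j − sᵢⁱⁿ sⱼᵒᵘᵗ / T)`. -/
noncomputable def modularity {n : ℕ} (wb : Fin n → Fin n → ℝ) (C : Fin n → ℕ) : ℝ :=
  (1 / totalW wb) *
    ∑ i : Fin n, ∑ j : Fin n,
      if C i = C j then wb i j - sIn wb i * sOut wb j / totalW wb else 0

/-- The symmetric clique-partitioning weights associated to modularity:
`w i j = w̄ i j / T − sᵢⁱⁿ sⱼᵒᵘᵗ / T² + w̄ j i / T − sⱼⁱⁿ sᵢᵒᵘᵗ / T²`. -/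
noncomputable def modW {n : ℕ} (wb : Fin n → Fin n → ℝ) : Fin n → Fin n → ℝ := fun i j =>
  wb i j / totalW wb - sIn wb i * sOut wb j / (totalW wb) ^ 2
    + wb j i / totalW wb - sIn wb j * sOut wb i / (totalW wb) ^ 2

/-! With the modularity matrix `B i j = w̄ i j − sᵢⁱⁿ sⱼᵒᵘᵗ / T` one has
`Q(C) = (1/T) ∑_{C i = C j} B i j` and `w i j = (B i j + B j i) / T`. Split the sum over ordered
pairs into the pairs `i < j`, the pairs `j < i` (the pairs `i < j` with `B` transposed) and the
diagonal, which lies within clusters for every `C`: this gives `Q(C) = Q_w(C) + (1/T) ∑_i B i i`.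
The two objectives differ by a constant, so they have the same maximizers. -/

theorem Finset.sum_sum_eq_sum_sum_lt_add_sum_diag {ι M : Type*} [Fintype ι] [LinearOrder ι]
    [AddCommMonoid M] (h : ι → ι → M) :
    ∑ i, ∑ j, h i j = ∑ i, ∑ j, (if i < j then h i j + h j i else 0) + ∑ i, h i i := by
  have trichotomy : ∀ i j, h i j =
      (if i < j then h i j else 0) + (if j < i then h i j else 0) + (if i = j then h i j else 0) := by
    intro i j
    rcases lt_trichotomy i j with hij | rfl | hij
    · simp [hij, hij.not_gt, hij.ne]
    · simp
    · simp [hij, hij.not_gt, hij.ne']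
  have upper : ∑ i : ι, ∑ j : ι, (if j < i then h i j else 0) =
      ∑ i : ι, ∑ j : ι, if i < j then h j i else 0 := sum_comm
  have diag : ∑ i : ι, ∑ j : ι, (if i = j then h i j else 0) = ∑ i, h i i := by
    simp
  calc ∑ i, ∑ j, h i j
      = ∑ i, ∑ j, (if i < j then h i j else 0) + ∑ i, ∑ j, (if j < i then h i j else 0)
          + ∑ i, ∑ j, (if i = j then h i j else 0) := by
        simp only [← sum_add_distrib, ← trichotomy]
    _ = ∑ i, ∑ j, (if i < j then h i j + h j i else 0) + ∑ i, h i i := by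
        rw [upper, diag]
        simp only [← sum_add_distrib, ite_add_zero]

theorem cpScore_const_mul {n : ℕ} (c : ℝ) (w : Fin n → Fin n → ℝ) (C : Fin n → ℕ) :
    cpScore (fun i j => c * w i j) C = c * cpScore w C := by
  simp only [cpScore, mul_sum, mul_ite, mul_zero]

noncomputable def modMatrix {n : ℕ} (wb : Fin n → Fin n → ℝ) (i j : Fin n) : ℝ :=
  wb i j - sIn wb i * sOut wb j / totalW wb

theorem modularity_eq_sum_modMatrix {n : ℕ} (wb : Fin n → Fin n → ℝ) (C : Fin n → ℕ) :
    modularity wb C = 1 / totalW wb * ∑ i, ∑ j, if C i = C j then modMatrix wb i j else 0 :=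
  rfl

theorem sum_sameCluster_eq_cpScore_symm_add_diag {n : ℕ} (B : Fin n → Fin n → ℝ) (C : Fin n → ℕ) :
    ∑ i, ∑ j, (if C i = C j then B i j else 0) =
      cpScore (fun i j => B i j + B j i) C + ∑ i, B i i := by
  rw [Finset.sum_sum_eq_sum_sum_lt_add_sum_diag, cpScore]
  simp only [if_true]
  congr 1
  refine sum_congr rfl fun i _ => sum_congr rfl fun j _ => ?_
  by_cases hij : i < j <;> by_cases hC : C i = C j <;> simp [hij, hC, eq_comm]

theorem modW_eq_symm_modMatrix {n : ℕ} (wb : Fin n → Fin n → ℝ) :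
    modW wb = fun i j => 1 / totalW wb * (modMatrix wb i j + modMatrix wb j i) := by
  ext i j
  simp only [modW, modMatrix]
  ring

theorem modularity_eq_cpScore_modW_add {n : ℕ} (wb : Fin n → Fin n → ℝ) (C : Fin n → ℕ) :
    modularity wb C =
      cpScore (modW wb) C + 1 / totalW wb * ∑ i, (wb i i - sIn wb i * sOut wb i / totalW wb) := by
  rw [modularity_eq_sum_modMatrix, sum_sameCluster_eq_cpScore_symm_add_diag,
    modW_eq_symm_modMatrix, cpScore_const_mul, mul_add]
  rfl

theorem modularity_is_clique_partitioning_general {n : ℕ} (wb : Fin n → Fin n → ℝ) :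
    (∀ C : Fin n → ℕ,
      modularity wb C =
        cpScore (modW wb) C
          + (1 / totalW wb) * ∑ i : Fin n, (wb i i - sIn wb i * sOut wb i / totalW wb)) ∧
    (∀ C₀ : Fin n → ℕ,
      (∀ C : Fin n → ℕ, modularity wb C ≤ modularity wb C₀) ↔
      (∀ C : Fin n → ℕ, cpScore (modW wb) C ≤ cpScore (modW wb) C₀)) :=
  ⟨modularity_eq_cpScore_modW_add wb, fun C₀ => by
    simp only [modularity_eq_cpScore_modW_add, add_le_add_iff_right]⟩

/-- **Modularity maximization is a clique partitioning problem.** For every partition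
`C`, modularity equals the clique partitioning score for the weights `modW wb` plus a
constant `D = (1/T) ∑_i (w̄ i i − sᵢⁱⁿ sᵢᵒᵘᵗ / T)` independent of `C`; in particular a
partition maximizes modularity iff it maximizes the clique partitioning score. -/
theorem modularity_is_clique_partitioning {n : ℕ} (wb : Fin n → Fin n → ℝ)
    (hT : totalW wb ≠ 0) :
    (∀ C : Fin n → ℕ,
      modularity wb C =
        cpScore (modW wb) C
          + (1 / totalW wb) * ∑ i : Fin n, (wb i i - sIn wb i * sOut wb i / totalW wb)) ∧
    (∀ C₀ : Fin n → ℕ,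
      (∀ C : Fin n → ℕ, modularity wb C ≤ modularity wb C₀) ↔
      (∀ C : Fin n → ℕ, cpScore (modW wb) C ≤ cpScore (modW wb) C₀)) :=
  modularity_is_clique_partitioning_general wb
end
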